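/- Let G be a finite connected graph, V₁ ⊂ V₂ nonempty proper subsets of its vertex set, and let S₁, …, S_ℓ be all the equivalence classes of ∼_{V₁} on V \ V₁ of minimum cardinality μ(V₁). If the union S₁ ∪ ⋯ ∪ S_ℓ is not contained in V₂ \ V₁, then μ(V₂) ≤ μ(V₁). -/

import Mathlib

open scoped Classical

variable {V : Type*} [Fintype V] [DecidableEq V]

/-- The equivalence class of `v` under the equal-metric-representation relation
with respect to `S`: all vertices outside `S` whose distance vector to `S`
agrees with that of `v`. -/
noncomputable def classOf (G : SimpleGraph V) (S : Finset V) (v : V) : Finset V :=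
  Finset.univ.filter (fun u => u ∉ S ∧ ∀ w ∈ S, G.dist u w = G.dist v w)

/-- `mu G S` is the minimum cardinality of an equivalence class of the
equal-metric-representation relation on `V \ S`. -/
noncomputable def mu (G : SimpleGraph V) (S : Finset V) : ℕ :=
  sInf {n | ∃ v, v ∉ S ∧ n = (classOf G S v).card}

/-! Enlarging the landmark set can only refine the classes, so the class in `V₂` of a minimal
`V₁`-class vertex lying outside `V₂` has at most `μ(V₁)` elements. -/

theorem classOf_antitone (G : SimpleGraph V) {S T : Finset V} (hST : S ⊆ T) (v : V) :
    classOf G T v ⊆ classOf G S v := by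
  intro u hu
  simp only [classOf, Finset.mem_filter, Finset.mem_univ, true_and] at hu ⊢
  exact ⟨fun huS => hu.1 (hST huS), fun w hw => hu.2 w (hST hw)⟩

theorem mu_le_card_classOf (G : SimpleGraph V) {S : Finset V} {v : V} (hv : v ∉ S) :
    mu G S ≤ (classOf G S v).card :=
  Nat.sInf_le ⟨v, hv, rfl⟩

theorem stmt3_general (G : SimpleGraph V)
    (V₁ V₂ : Finset V) (hsub : V₁ ⊂ V₂)
    (hU : ¬ (V₁ᶜ.filter (fun v => (classOf G V₁ v).card = mu G V₁) ⊆ V₂ \ V₁)) :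
    mu G V₂ ≤ mu G V₁ := by
  obtain ⟨v, hv, hv_not_mem⟩ := Finset.not_subset.mp hU
  obtain ⟨hvV₁, hv_min⟩ := Finset.mem_filter.mp hv
  have hvV₂ : v ∉ V₂ := fun hvV₂ =>
    hv_not_mem (Finset.mem_sdiff.mpr ⟨hvV₂, Finset.mem_compl.mp hvV₁⟩)
  calc mu G V₂ ≤ (classOf G V₂ v).card := mu_le_card_classOf G hvV₂
    _ ≤ (classOf G V₁ v).card := Finset.card_le_card (classOf_antitone G hsub.subset v)
    _ = mu G V₁ := hv_min

theorem stmt3 (G : SimpleGraph V) (hG : G.Connected)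
    (V₁ V₂ : Finset V) (h1 : V₁.Nonempty) (hsub : V₁ ⊂ V₂)
    (hproper : V₂ ⊂ Finset.univ)
    (hU : ¬ (V₁ᶜ.filter (fun v => (classOf G V₁ v).card = mu G V₁) ⊆ V₂ \ V₁)) :
    mu G V₂ ≤ mu G V₁ :=
  stmt3_general G V₁ V₂ hsub hU
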